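/- arXiv:2005.03509 — 3 statements merged into one kernel-verified Lean document; each statement's English description precedes it below -/
import Mathlib

section
/- Let f ∈ A = ℝ[x¹,…,xⁿ], write f_i := ∂_i f and f_ih := ∂_i ∂_h f, and set L_ij := f_i·∂_j − f_j·∂_i as derivations of A. Then for all indices i, j, h, k the commutator of derivations satisfies ⁅L_ij, L_hk⁆ = f_jh·L_ik − f_ih·L_jk − f_jk·L_ih + f_ik·L_jh, where g·D denotes the derivation a ↦ g·D(a). -/
open MvPolynomial

/-- Mixed partial derivatives of multivariate polynomials commute. -/
lemma pderiv_comm' {σ : Type*} [DecidableEq σ] {R : Type*} [CommSemiring R]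
    (i j : σ) (p : MvPolynomial σ R) :
    pderiv i (pderiv j p) = pderiv j (pderiv i p) := by
  induction p using MvPolynomial.induction_on with
  | C a => simp
  | add p q hp hq => simp [hp, hq]
  | mul_X p m hp =>
    simp only [pderiv_mul, map_add, pderiv_mul, hp, pderiv_X, Pi.single_apply]
    split_ifs with h1 h2 h2 <;> simp_all

/-- The tangent derivations `L_ij := f_i·∂_j − f_j·∂_i` of a level set of `f`. -/
noncomputable def Lder {n : ℕ} (f : MvPolynomial (Fin n) ℝ) (i j : Fin n) :
    Derivation ℝ (MvPolynomial (Fin n) ℝ) (MvPolynomial (Fin n) ℝ) :=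
  (pderiv i f) • (pderiv j) - (pderiv j f) • (pderiv i)

set_option maxHeartbeats 2000000 in
/-- Commutation relations of the `L_ij`:
`⁅L_ij, L_hk⁆ = f_jh·L_ik − f_ih·L_jk − f_jk·L_ih + f_ik·L_jh`. -/
theorem statement4 {n : ℕ} (f : MvPolynomial (Fin n) ℝ) (i j h k : Fin n) :
    ⁅Lder f i j, Lder f h k⁆ =
      (pderiv j (pderiv h f)) • Lder f i k - (pderiv i (pderiv h f)) • Lder f j k
        - (pderiv j (pderiv k f)) • Lder f i h + (pderiv i (pderiv k f)) • Lder f j h := by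
  apply MvPolynomial.derivation_ext
  intro m
  simp only [Derivation.commutator_apply, Lder, Derivation.sub_apply, Derivation.add_apply,
    Derivation.smul_apply, smul_eq_mul, map_sub, map_mul, pderiv_mul, pderiv_X, Pi.single_apply]
  split_ifs <;>
    (try simp only [pderiv_one, pderiv_C, map_zero, map_one, mul_zero, zero_mul, mul_one, one_mul,
      add_zero, zero_add, sub_zero, zero_sub]) <;>
    (try simp only [pderiv_comm']) <;> ring
end

section
/- Let f ∈ A = ℝ[x¹,…,xⁿ] be such that all second partial derivatives are constant: ∂_i ∂_j f = a_ij·1 with real numbers a_ij = a_ji (e.g. f a polynomial of degree at most 2). Set L_ij := (∂_i f)·∂_j − (∂_j f)·∂_i. Then for all indices i, j, h, k one has ⁅L_ij, L_hk⁆ = a_jh·L_ik − a_ih·L_jk − a_jk·L_ih + a_ik·L_jh (with real scalar coefficients); consequently the ℝ-linear span of the L_ij is a Lie subalgebra of the derivations of A, of dimension at most n(n−1)/2. -/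
/-! For derivations `D, D'` and functions `g, h` one has
`⁅g • D, h • D'⁆ = g D(h) • D' - h D'(g) • D + g h • ⁅D, D'⁆`. The partial derivatives commute
and `∂_i f_j = a_ij` is constant, so the bracket of two `L`'s is a real combination of `L`'s,
and a bilinear bracket that preserves a spanning set preserves its span. Since
`L_ji = -L_ij` and `L_ii = 0`, the `L_ij` with `i < j` already span, giving the bound
`n choose 2`. -/

open MvPolynomial

theorem MvPolynomial.pderiv_lie_pderiv {σ R : Type*} [CommRing R] (i j : σ) :
    ⁅pderiv (R := R) i, pderiv (R := R) j⁆ = 0 := by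
  classical
  refine derivation_ext fun k => ?_
  simp [Derivation.commutator_apply, pderiv_X, Pi.single_apply, apply_ite (pderiv _)]

theorem Derivation.smul_lie_smul {R A : Type*} [CommRing R] [CommRing A] [Algebra R A]
    (g h : A) (D D' : Derivation R A A) :
    ⁅g • D, h • D'⁆ = (g * D h) • D' - (h * D' g) • D + (g * h) • ⁅D, D'⁆ := by
  ext x
  simp only [Derivation.commutator_apply, Derivation.smul_apply, Derivation.add_apply,
    Derivation.sub_apply, smul_eq_mul, Derivation.leibniz]
  ring

theorem Submodule.lie_mem_span_of_forall_lie_mem_span {R L : Type*} [CommRing R] [LieRing L]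
    [LieAlgebra R L] {s : Set L} (hs : ∀ x ∈ s, ∀ y ∈ s, ⁅x, y⁆ ∈ span R s) {x y : L}
    (hx : x ∈ span R s) (hy : y ∈ span R s) : ⁅x, y⁆ ∈ span R s := by
  induction hx, hy using span_induction₂ with
  | mem_mem x y hx hy => exact hs x hx y hy
  | zero_left y hy => simp
  | zero_right x hx => simp
  | add_left x y z _ _ _ hx hy => simpa using add_mem hx hy
  | add_right x y z _ _ _ hx hy => simpa using add_mem hx hy
  | smul_left r x y _ _ h => simpa using smul_mem _ r h
  | smul_right r x y _ _ h => simpa using smul_mem _ r h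

section TangentDerivations

variable {R A ι : Type*} [CommRing R] [CommRing A] [Algebra R A]

def tangentDer (D : ι → Derivation R A A) (f : A) (i j : ι) : Derivation R A A :=
  D i f • D j - D j f • D i

theorem lie_tangentDer {D : ι → Derivation R A A} (hD : ∀ i j, ⁅D i, D j⁆ = 0) {f : A}
    {a : ι → ι → R} (hconst : ∀ i j, D i (D j f) = algebraMap R A (a i j)) (i j h k : ι) :
    ⁅tangentDer D f i j, tangentDer D f h k⁆ =
      a j h • tangentDer D f i k - a i h • tangentDer D f j k
        - a j k • tangentDer D f i h + a i k • tangentDer D f j h := by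
  -- commuting derivations make the constant Hessian symmetric
  have hsymm : ∀ i j, algebraMap R A (a i j) = algebraMap R A (a j i) := fun i j => by
    rw [← hconst, ← hconst, ← sub_eq_zero, ← Derivation.commutator_apply, hD]
    rfl
  simp only [tangentDer, sub_lie, lie_sub, Derivation.smul_lie_smul, hD, hconst, smul_zero,
    add_zero, ← algebraMap_smul A (a _ _)]
  rw [hsymm k i, hsymm h i, hsymm k j, hsymm h j]
  module

end TangentDerivations

theorem span_range_eq_span_range_lt {R M ι : Type*} [Ring R] [AddCommGroup M] [Module R M]
    [LinearOrder ι] {v : ι → ι → M} (hself : ∀ i, v i i = 0) (hswap : ∀ i j, v j i = -v i j) :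
    Submodule.span R (Set.range fun p : ι × ι => v p.1 p.2) =
      Submodule.span R (Set.range fun p : {p : ι × ι // p.1 < p.2} => v p.1.1 p.1.2) := by
  refine le_antisymm (Submodule.span_le.mpr ?_) (Submodule.span_mono ?_)
  · rintro _ ⟨⟨i, j⟩, rfl⟩
    have hmem : ∀ i j, i < j → v i j ∈ Submodule.span R
        (Set.range fun p : {p : ι × ι // p.1 < p.2} => v p.1.1 p.1.2) :=
      fun i j hij => Submodule.subset_span ⟨⟨(i, j), hij⟩, rfl⟩
    rcases lt_trichotomy i j with hij | rfl | hji
    · exact hmem i j hij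
    · simp [hself]
    · simpa [hswap j i] using hmem j i hji
  · rintro _ ⟨p, rfl⟩
    exact ⟨p.1, rfl⟩

theorem finrank_span_range_le_choose_two {R M ι : Type*} [Ring R] [StrongRankCondition R]
    [AddCommGroup M] [Module R M] [Fintype ι] [LinearOrder ι] {v : ι → ι → M}
    (hself : ∀ i, v i i = 0) (hswap : ∀ i j, v j i = -v i j) :
    Module.finrank R (Submodule.span R (Set.range fun p : ι × ι => v p.1 p.2)) ≤
      (Fintype.card ι).choose 2 := by
  rw [span_range_eq_span_range_lt hself hswap, ← Fintype.card_product_filter_lt,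
    ← Fintype.card_subtype]
  exact finrank_range_le_card _

theorem statement5_general {n : ℕ} (f : MvPolynomial (Fin n) ℝ) (a : Fin n → Fin n → ℝ)
    (hconst : ∀ i j, pderiv i (pderiv j f) = C (a i j)) :
    (∀ i j h k : Fin n,
      ⁅Lder f i j, Lder f h k⁆ =
        a j h • Lder f i k - a i h • Lder f j k
          - a j k • Lder f i h + a i k • Lder f j h) ∧
    (∀ D D' : Derivation ℝ (MvPolynomial (Fin n) ℝ) (MvPolynomial (Fin n) ℝ),
      D ∈ Submodule.span ℝ (Set.range fun p : Fin n × Fin n => Lder f p.1 p.2) →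
      D' ∈ Submodule.span ℝ (Set.range fun p : Fin n × Fin n => Lder f p.1 p.2) →
      ⁅D, D'⁆ ∈ Submodule.span ℝ (Set.range fun p : Fin n × Fin n => Lder f p.1 p.2)) ∧
    Module.finrank ℝ
      (Submodule.span ℝ (Set.range fun p : Fin n × Fin n => Lder f p.1 p.2))
      ≤ n * (n - 1) / 2 := by
  have hbracket : ∀ i j h k : Fin n, ⁅Lder f i j, Lder f h k⁆ =
      a j h • Lder f i k - a i h • Lder f j k - a j k • Lder f i h + a i k • Lder f j h :=
    lie_tangentDer (D := fun i => pderiv i) pderiv_lie_pderiv hconst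
  refine ⟨hbracket, fun D D' => Submodule.lie_mem_span_of_forall_lie_mem_span ?_, ?_⟩
  · rintro _ ⟨⟨i, j⟩, rfl⟩ _ ⟨⟨h, k⟩, rfl⟩
    have hmem : ∀ i j, Lder f i j ∈ Submodule.span ℝ
        (Set.range fun p : Fin n × Fin n => Lder f p.1 p.2) :=
      fun i j => Submodule.subset_span ⟨(i, j), rfl⟩
    rw [hbracket]
    refine add_mem (sub_mem (sub_mem ?_ ?_) ?_) ?_ <;> exact Submodule.smul_mem _ _ (hmem _ _)
  · rw [← Nat.choose_two_right]
    simpa using finrank_span_range_le_choose_two (R := ℝ) (v := Lder f)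
      (fun i => by simp [Lder]) (fun i j => by simp [Lder])

/-- If all second partial derivatives of `f` are constants `a_ij = a_ji`, then
`⁅L_ij, L_hk⁆ = a_jh·L_ik − a_ih·L_jk − a_jk·L_ih + a_ik·L_jh` with real scalar
coefficients; consequently the real span of the `L_ij` is closed under the
bracket and has dimension at most `n(n−1)/2`. -/
theorem statement5 {n : ℕ} (f : MvPolynomial (Fin n) ℝ) (a : Fin n → Fin n → ℝ)
    (hconst : ∀ i j, pderiv i (pderiv j f) = C (a i j))
    (hsymm : ∀ i j, a i j = a j i) :
    (∀ i j h k : Fin n,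
      ⁅Lder f i j, Lder f h k⁆ =
        a j h • Lder f i k - a i h • Lder f j k
          - a j k • Lder f i h + a i k • Lder f j h) ∧
    (∀ D D' : Derivation ℝ (MvPolynomial (Fin n) ℝ) (MvPolynomial (Fin n) ℝ),
      D ∈ Submodule.span ℝ (Set.range fun p : Fin n × Fin n => Lder f p.1 p.2) →
      D' ∈ Submodule.span ℝ (Set.range fun p : Fin n × Fin n => Lder f p.1 p.2) →
      ⁅D, D'⁆ ∈ Submodule.span ℝ (Set.range fun p : Fin n × Fin n => Lder f p.1 p.2)) ∧
    Module.finrank ℝ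
      (Submodule.span ℝ (Set.range fun p : Fin n × Fin n => Lder f p.1 p.2))
      ≤ n * (n - 1) / 2 :=
  statement5_general f a hconst
end

section
/- In A = ℝ[x¹,x²,x³], fix b ∈ ℝ and define the derivations L₁₂ := x¹·∂₂, L₁₃ := x¹·∂₃ + b·∂₁, L₂₃ := b·∂₂. Then ⁅L₁₃, L₁₂⁆ = L₂₃, ⁅L₁₂, L₂₃⁆ = 0, and ⁅L₁₃, L₂₃⁆ = 0 (so the span of L₁₂, L₁₃, L₂₃ is a Heisenberg Lie algebra with central element L₂₃); moreover, for every c ∈ ℝ, each of L₁₂, L₁₃, L₂₃ annihilates the polynomial f_c := (1/2)(x¹)² − b·x³ − c defining a parabolic cylinder. -/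
open MvPolynomial

namespace ParabolicCylinder

/-- `L₁₂ := x¹·∂₂`. -/
noncomputable def L12 : Derivation ℝ (MvPolynomial (Fin 3) ℝ) (MvPolynomial (Fin 3) ℝ) :=
  (X 0 : MvPolynomial (Fin 3) ℝ) • pderiv 1

/-- `L₁₃ := x¹·∂₃ + b·∂₁`. -/
noncomputable def L13 (b : ℝ) :
    Derivation ℝ (MvPolynomial (Fin 3) ℝ) (MvPolynomial (Fin 3) ℝ) :=
  (X 0 : MvPolynomial (Fin 3) ℝ) • pderiv 2 + (C b : MvPolynomial (Fin 3) ℝ) • pderiv 0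

/-- `L₂₃ := b·∂₂`. -/
noncomputable def L23 (b : ℝ) :
    Derivation ℝ (MvPolynomial (Fin 3) ℝ) (MvPolynomial (Fin 3) ℝ) :=
  (C b : MvPolynomial (Fin 3) ℝ) • pderiv 1

/-- The parabolic cylinder `f_c := (1/2)(x¹)² − b·x³ − c`. -/
noncomputable def fc (b c : ℝ) : MvPolynomial (Fin 3) ℝ :=
  C (1 / 2 : ℝ) * (X 0) ^ 2 - C b * X 2 - C c

end ParabolicCylinder

open ParabolicCylinder in
/-- Heisenberg Lie algebra relations for the tangent vector fields of the family of
parabolic cylinders, and tangency: each `L_ij` annihilates every `f_c`. -/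
theorem statement9 (b : ℝ) :
    ⁅L13 b, L12⁆ = L23 b ∧
    ⁅L12, L23 b⁆ = 0 ∧
    ⁅L13 b, L23 b⁆ = 0 ∧
    (∀ c : ℝ, L12 (fc b c) = 0 ∧ L13 b (fc b c) = 0 ∧ L23 b (fc b c) = 0) := by
  refine ⟨?_, ?_, ?_, ?_⟩
  · apply MvPolynomial.derivation_ext
    intro i
    fin_cases i <;>
      simp [L12, L13, L23, Derivation.commutator_apply, pderiv_X, Pi.single_apply]
  · apply MvPolynomial.derivation_ext
    intro i
    fin_cases i <;>
      simp [L12, L13, L23, Derivation.commutator_apply, pderiv_X, Pi.single_apply]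
  · apply MvPolynomial.derivation_ext
    intro i
    fin_cases i <;>
      simp [L12, L13, L23, Derivation.commutator_apply, pderiv_X, Pi.single_apply]
  · intro c
    have h : ((C (2⁻¹:ℝ) : MvPolynomial (Fin 3) ℝ)) * 2 = 1 := by
      rw [show (2 : MvPolynomial (Fin 3) ℝ) = C 2 from (map_ofNat C 2).symm, ← C_mul, ← C_1]
      norm_num
    refine ⟨?_, ?_, ?_⟩ <;>
      simp [L12, L13, L23, fc, pderiv_X, Pi.single_apply] <;>
      · linear_combination (C b * X 0 : MvPolynomial (Fin 3) ℝ) * h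
end
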